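/- Let A be an associative unital ℂ-algebra, m, k ∈ ℂ, and let a, b, c, d, f ∈ A satisfy the G_{m,k} relations. Then the element δ = a·d − b·c + m·a·c satisfies δ = a·d − c·b − m·c·d, and δ commutes with each of a, b, c, d and f. -/

import Mathlib

noncomputable section

/-- The defining relations of the Jordanian quantum group `G_{m,k}` for elements
`a, b, c, d, f` of a unital associative `ℂ`-algebra `A`, with
`δ = a·d − b·c + m·a·c`. -/
def GmkRelations {A : Type*} [Ring A] [Algebra ℂ A] (m k : ℂ) (a b c d f : A) : Prop :=
  c * d - d * c = (-m) • (c * c) ∧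
  c * b - b * c = (-m) • (a * c + c * d) ∧
  c * a - a * c = (-m) • (c * c) ∧
  d * a - a * d = (-m) • ((d - a) * c) ∧
  d * b - b * d = (-m) • (d * d - (a * d - b * c + m • (a * c))) ∧
  b * a - a * b = (-m) • ((a * d - b * c + m • (a * c)) - a * a) ∧
  f * a - a * f = k • (c * f) ∧
  f * b - b * f = k • (d * f - f * a) ∧
  f * c = c * f ∧
  f * d - d * f = (-k) • (c * f)

/-!
Write `T = [[a, b], [c, d]]`. The relations for `c` and for `f` say that `g = c` or `g = f`
normalises the entries of `T`: `g * T = (U_s * T * U_t) * g` entrywise, where `U_s` is the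
unipotent shear `[[1, s], [0, 1]]` (`s = t = -m` for `c`, and `s = -t = k` for `f`).
Since `δ` is multiplicative in the sense of semiconjugation and, thanks to
`c d - d c = -m c²`, invariant under `T ↦ U_s T U_t`, it commutes with `c` and `f`.
For `a`, `b` and `d` the commutator `[δ, g]` is an explicit two-sided combination of the
relations.
-/

def gmkDelta {R A : Type*} [CommRing R] [Ring A] [Algebra R A] (m : R) (a b c d : A) : A :=
  a * d - b * c + m • (a * c)

section Shear

variable {R A : Type*} [CommRing R] [Ring A] [Algebra R A]

theorem semiconjBy_self_add_iff {g x y : A} : SemiconjBy g x (x + y) ↔ g * x - x * g = y * g := by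
  rw [SemiconjBy, add_mul, sub_eq_iff_eq_add']

theorem SemiconjBy.gmkDelta {g a b c d a' b' c' d' : A} (m : R) (ha : SemiconjBy g a a')
    (hb : SemiconjBy g b b') (hc : SemiconjBy g c c') (hd : SemiconjBy g d d') :
    SemiconjBy g (gmkDelta m a b c d) (gmkDelta m a' b' c' d') :=
  ((ha.mul_right hd).sub_right (hb.mul_right hc)).add_right ((ha.mul_right hc).smul_right m)

theorem gmkDelta_shear {m : R} {a b c d : A} (s t : R) (hcd : c * d - d * c = (-m) • (c * c)) :
    gmkDelta m (a + s • c) (b + (s • d + t • a + (s * t) • c)) c (d + t • c) =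
      gmkDelta m a b c d := by
  rw [← sub_eq_zero]
  calc _ = s • (c * d - d * c - (-m) • (c * c)) := by
        simp only [gmkDelta, mul_add, add_mul, mul_smul_comm, smul_mul_assoc, smul_sub]
        module
    _ = 0 := by rw [hcd, sub_self, smul_zero]

theorem commute_gmkDelta_of_shear {m : R} {g a b c d : A} (s t : R)
    (hcd : c * d - d * c = (-m) • (c * c)) (ha : SemiconjBy g a (a + s • c))
    (hb : SemiconjBy g b (b + (s • d + t • a + (s * t) • c))) (hc : Commute g c)
    (hd : SemiconjBy g d (d + t • c)) :
    Commute (gmkDelta m a b c d) g := by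
  have hδ := SemiconjBy.gmkDelta m ha hb hc hd
  rw [gmkDelta_shear s t hcd] at hδ
  exact hδ.symm

end Shear

namespace GmkRelations

variable {A : Type*} [Ring A] [Algebra ℂ A] {m k : ℂ} {a b c d f : A}

theorem gmkDelta_eq (h : GmkRelations m k a b c d f) :
    gmkDelta m a b c d = a * d - c * b - m • (c * d) := by
  obtain ⟨-, h2, -⟩ := h
  unfold gmkDelta
  linear_combination (norm := module) h2

theorem commute_gmkDelta_a (h : GmkRelations m k a b c d f) : Commute (gmkDelta m a b c d) a := by
  obtain ⟨-, -, h3, h4, -, h6, -⟩ := h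
  unfold Commute SemiconjBy gmkDelta
  linear_combination (norm := skip) a * h4 - h6 * c - b * h3 + m • (a * h3)
  -- `A` is not commutative, so instead of `ring`: expand into monomials, compare coefficients
  simp only [mul_add, add_mul, mul_sub, sub_mul, mul_smul_comm, smul_mul_assoc, mul_assoc]
  module

theorem commute_gmkDelta_b (h : GmkRelations m k a b c d f) : Commute (gmkDelta m a b c d) b := by
  obtain ⟨-, h2, -, -, h5, h6, -⟩ := h
  unfold Commute SemiconjBy gmkDelta
  linear_combination (norm := skip) a * h5 - h6 * d - (b - m • a) * h2
  simp only [mul_add, add_mul, mul_sub, sub_mul, mul_smul_comm, smul_mul_assoc, mul_assoc]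
  module

theorem commute_gmkDelta_d (h : GmkRelations m k a b c d f) : Commute (gmkDelta m a b c d) d := by
  obtain ⟨h1, -, -, h4, h5, -⟩ := h
  unfold Commute SemiconjBy gmkDelta
  linear_combination (norm := skip) h5 * c - h4 * d - m • (h4 * c) - (b - m • d) * h1
  simp only [mul_add, add_mul, mul_sub, sub_mul, mul_smul_comm, smul_mul_assoc, mul_assoc]
  module

theorem commute_gmkDelta_c (h : GmkRelations m k a b c d f) : Commute (gmkDelta m a b c d) c := by
  obtain ⟨h1, h2, h3, -⟩ := h
  refine commute_gmkDelta_of_shear (-m) (-m) h1 ?_ ?_ (Commute.refl c) ?_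
  · rw [semiconjBy_self_add_iff, h3, smul_mul_assoc]
  · rw [semiconjBy_self_add_iff, h2, eq_add_of_sub_eq' h1]
    simp only [add_mul, smul_mul_assoc]
    module
  · rw [semiconjBy_self_add_iff, h1, smul_mul_assoc]

theorem commute_gmkDelta_f (h : GmkRelations m k a b c d f) : Commute (gmkDelta m a b c d) f := by
  obtain ⟨h1, -, -, -, -, -, h7, h8, h9, h10⟩ := h
  refine commute_gmkDelta_of_shear k (-k) h1 ?_ ?_ h9 ?_
  · rw [semiconjBy_self_add_iff, h7, smul_mul_assoc]
  · rw [semiconjBy_self_add_iff, h8, eq_add_of_sub_eq' h7]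
    simp only [add_mul, smul_mul_assoc]
    module
  · rw [semiconjBy_self_add_iff, h10, smul_mul_assoc]

end GmkRelations

/-- for generators satisfying the `G_{m,k}` relations, the element
`δ = a·d − b·c + m·a·c` also equals `a·d − c·b − m·c·d` and is central, i.e. it commutes
with each of `a`, `b`, `c`, `d`, `f`. -/
theorem Gmk_delta_central (A : Type*) [Ring A] [Algebra ℂ A] (m k : ℂ)
    (a b c d f : A) (h : GmkRelations m k a b c d f) :
    (a * d - b * c + m • (a * c) = a * d - c * b - m • (c * d)) ∧
    ((a * d - b * c + m • (a * c)) * a = a * (a * d - b * c + m • (a * c))) ∧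
    ((a * d - b * c + m • (a * c)) * b = b * (a * d - b * c + m • (a * c))) ∧
    ((a * d - b * c + m • (a * c)) * c = c * (a * d - b * c + m • (a * c))) ∧
    ((a * d - b * c + m • (a * c)) * d = d * (a * d - b * c + m • (a * c))) ∧
    ((a * d - b * c + m • (a * c)) * f = f * (a * d - b * c + m • (a * c))) :=
  ⟨h.gmkDelta_eq, h.commute_gmkDelta_a, h.commute_gmkDelta_b, h.commute_gmkDelta_c,
    h.commute_gmkDelta_d, h.commute_gmkDelta_f⟩
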